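/- For constants γ > 0, c > 0, β ∈ (0,1], σ²_{n,j} = 2^{j/k_n}, k_n = c·n, and user index j = β·k_n, the message length C_{βk_n}(n) = (n/2)·log₂(1 + (γ/k_n)/(2^{β} + (βk_n − 1)γ/k_n)) converges as n → ∞ to γ·log₂(e)/(2c(2^{β} + βγ)). -/

import Mathlib

/-!
Write `x_n` for the argument of the logarithm minus one. The interference term
`(βk_n − 1)γ/k_n = βγ − γ/k_n` tends to `βγ`, so `x_n → 0` while `n x_n → γ/(c(2^β + βγ))`.
Since `log(1 + t) ~ t` at `0` (the derivative of `log(1 + t)` at `0` is `1`),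
`n log(1 + x_n)` has the same limit as `n x_n`; dividing by `2 log 2` gives the claim.
-/

open Filter Real Asymptotics Topology

theorem Real.isEquivalent_log_one_add : (fun t : ℝ => log (1 + t)) ~[𝓝 0] id := by
  have hderiv : HasDerivAt (fun t : ℝ => log (1 + t)) 1 0 := by
    simpa using ((hasDerivAt_id (0 : ℝ)).const_add 1).log (by norm_num)
  have h := hderiv.isLittleO
  simp only [add_zero, log_one, sub_zero, smul_eq_mul, mul_one] at h
  exact h

theorem Filter.Tendsto.mul_log_one_add {α : Type*} {l : Filter α} {a u : α → ℝ} {L : ℝ}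
    (hu : Tendsto u l (𝓝 0)) (hau : Tendsto (fun x => a x * u x) l (𝓝 L)) :
    Tendsto (fun x => a x * Real.log (1 + u x)) l (𝓝 L) :=
  ((IsEquivalent.refl (u := a)).mul (isEquivalent_log_one_add.comp_tendsto hu)).symm
    |>.tendsto_nhds hau

theorem tendsto_div_mul_natCast_atTop_zero (γ c : ℝ) :
    Tendsto (fun n : ℕ => γ / (c * n)) atTop (𝓝 0) := by
  simpa [div_div] using tendsto_const_div_atTop_nhds_zero_nat (γ / c)

theorem tendsto_sub_one_mul_div_mul_natCast (β γ : ℝ) {c : ℝ} (hc : c ≠ 0) :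
    Tendsto (fun n : ℕ => (β * (c * n) - 1) * γ / (c * n)) atTop (𝓝 (β * γ)) := by
  have hlim := (tendsto_div_mul_natCast_atTop_zero γ c).const_sub (β * γ)
  rw [sub_zero] at hlim
  refine hlim.congr' ?_
  filter_upwards [eventually_ne_atTop 0] with n hn
  field_simp

/-- For a user index scaling linearly, `j = β k_n` with `β ∈ (0,1]` and `k_n = c n`,
the message length
`C_{βk_n}(n) = (n/2) log₂(1 + (γ/k_n)/(2^β + (βk_n − 1)γ/k_n))`
converges to `γ log₂(e)/(2c(2^β + βγ))` as `n → ∞`. -/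
theorem gaussian_many_broadcast_linear_user_limit (γ c β : ℝ) (hγ : 0 < γ) (hc : 0 < c)
    (hβ : β ∈ Set.Ioc (0 : ℝ) 1) :
    Tendsto (fun n : ℕ => (n : ℝ) / 2 *
        Real.logb 2 (1 + (γ / (c * n)) /
          ((2 : ℝ) ^ β + (β * (c * n) - 1) * γ / (c * n))))
      atTop (nhds (γ * Real.logb 2 (Real.exp 1) / (2 * c * ((2 : ℝ) ^ β + β * γ)))) := by
  have hA : 0 < (2 : ℝ) ^ β + β * γ := by have := hβ.1; positivity
  have hD := (tendsto_sub_one_mul_div_mul_natCast β γ hc.ne').const_add ((2 : ℝ) ^ β)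
  have hx : Tendsto (fun n : ℕ => γ / (c * n) / ((2 : ℝ) ^ β + (β * (c * n) - 1) * γ / (c * n)))
      atTop (𝓝 0) := by
    have h := (tendsto_div_mul_natCast_atTop_zero γ c).div hD hA.ne'
    rwa [zero_div] at h
  have hnx : Tendsto (fun n : ℕ => (n : ℝ) *
      (γ / (c * n) / ((2 : ℝ) ^ β + (β * (c * n) - 1) * γ / (c * n))))
      atTop (𝓝 (γ / c / ((2 : ℝ) ^ β + β * γ))) := by
    refine (tendsto_const_nhds.div hD hA.ne').congr' ?_
    filter_upwards [eventually_ne_atTop 0] with n hn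
    rw [Pi.div_apply]
    field_simp
  have hlim := (hx.mul_log_one_add hnx).div_const (2 * log 2)
  convert hlim using 1
  · ext n
    rw [logb]
    ring
  · rw [logb, log_exp]
    field_simp
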